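/- arXiv:1311.2285 — 2 statements merged into one kernel-verified Lean document; each statement's English description precedes it below -/
import Mathlib

section
/- Let X be a linear order with the order topology (LOTS), D an ultrafilter on a set I, (x_i)_{i∈I} a sequence in X, and let A = {x ∈ X : {i ∈ I : x < x_i} ∈ D} and B = {x ∈ X : {i ∈ I : x_i < x} ∈ D}. Then (x_i)_{i∈I} D-converges to a point x ∈ X if and only if either (a) {i ∈ I : x_i = x} ∈ D, or (b) x is the maximum of A and A ∪ B = X, or (c) x is the minimum of B and A ∪ B = X. -/
universe u v

open Set Cardinal Filter Topology TopologicalSpace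

section Defs

variable {X : Type u} [LinearOrder X]

/-- A subset `Y` of a linear order `X`, having no maximum, is `lam`-full in `X` on the right
if for every `y ∈ Y` the set `⋃ y' ∈ Y, (y, y')` (intervals computed in `X`)
has cardinality at least `lam`. -/
def FullRight (lam : Cardinal.{u}) (Y : Set X) : Prop :=
  (¬ ∃ m ∈ Y, ∀ y ∈ Y, y ≤ m) ∧
    ∀ y ∈ Y, lam ≤ #(⋃ y' ∈ Y, Ioo y y')

/-- A subset `Y` of a linear order `X`, having no minimum, is `lam`-full in `X` on the left
if for every `y ∈ Y` the set `⋃ y' ∈ Y, (y', y)` (intervals computed in `X`)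
has cardinality at least `lam`. -/
def FullLeft (lam : Cardinal.{u}) (Y : Set X) : Prop :=
  (¬ ∃ m ∈ Y, ∀ y ∈ Y, m ≤ y) ∧
    ∀ y ∈ Y, lam ≤ #(⋃ y' ∈ Y, Ioo y' y)

/-- The pair `(A, B)` is a gap of the space `X`: `A`, `B` are open, `A ∪ B = X`,
every element of `A` is less than every element of `B`, `A` has no maximum and `B` has
no minimum (`A` or `B` may be empty). -/
def IsGap [TopologicalSpace X] (A B : Set X) : Prop :=
  IsOpen A ∧ IsOpen B ∧ A ∪ B = Set.univ ∧ (∀ a ∈ A, ∀ b ∈ B, a < b) ∧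
    (¬ ∃ m ∈ A, ∀ a ∈ A, a ≤ m) ∧ (¬ ∃ m ∈ B, ∀ b ∈ B, m ≤ b)

/-- The pair `(A, B)` is a pseudo-gap of the space `X`: `A`, `B` are open and nonempty,
`A ∪ B = X`, every element of `A` is less than every element of `B`, and either `A` has a
maximum and `B` has no minimum, or `A` has no maximum and `B` has a minimum. -/
def IsPseudoGap [TopologicalSpace X] (A B : Set X) : Prop :=
  IsOpen A ∧ IsOpen B ∧ A ∪ B = Set.univ ∧ (∀ a ∈ A, ∀ b ∈ B, a < b) ∧
    A.Nonempty ∧ B.Nonempty ∧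
    (((∃ m ∈ A, ∀ a ∈ A, a ≤ m) ∧ ¬ ∃ m ∈ B, ∀ b ∈ B, m ≤ b) ∨
      ((¬ ∃ m ∈ A, ∀ a ∈ A, a ≤ m) ∧ ∃ m ∈ B, ∀ b ∈ B, m ≤ b))

/-- The cofinality of `A`: the least cardinality of a subset of `A` cofinal in `A`. -/
noncomputable def cofinCard (A : Set X) : Cardinal.{u} :=
  sInf {c | ∃ S : Set X, S ⊆ A ∧ (∀ a ∈ A, ∃ s ∈ S, a ≤ s) ∧ c = #S}

/-- The coinitiality of `B`: the least cardinality of a subset of `B` coinitial in `B`. -/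
noncomputable def coinitCard (B : Set X) : Cardinal.{u} :=
  sInf {c | ∃ S : Set X, S ⊆ B ∧ (∀ b ∈ B, ∃ s ∈ S, s ≤ b) ∧ c = #S}

/-- `mu` is a type of the gap `(A, B)`: `mu` is the cofinality of `A` or the coinitiality
of `B`. -/
def IsGapType (mu : Cardinal.{u}) (A B : Set X) : Prop :=
  mu = cofinCard A ∨ mu = coinitCard B

/-- `mu` is the type of the pseudo-gap `(A, B)`: the cofinality of `A` if `B` has a minimum,
the coinitiality of `B` if `A` has a maximum. -/
def IsPseudoGapType (mu : Cardinal.{u}) (A B : Set X) : Prop :=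
  ((∃ m ∈ B, ∀ b ∈ B, m ≤ b) ∧ mu = cofinCard A) ∨
    ((∃ m ∈ A, ∀ a ∈ A, a ≤ m) ∧ mu = coinitCard B)

end Defs

/-- A topological space is `[ν, ν]`-compact if every open cover of cardinality at most `ν`
has a subcover of cardinality less than `ν`. -/
def NuNuCompact (X : Type u) [TopologicalSpace X] (ν : Cardinal.{u}) : Prop :=
  ∀ 𝒰 : Set (Set X), (∀ U ∈ 𝒰, IsOpen U) → ⋃₀ 𝒰 = Set.univ → #𝒰 ≤ ν →
    ∃ 𝒱 ⊆ 𝒰, #𝒱 < ν ∧ ⋃₀ 𝒱 = Set.univ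

/-- A topological space is weakly `[ν, ν]`-compact if every open cover of cardinality at
most `ν` has a subfamily of cardinality less than `ν` whose union is dense. -/
def WeakNuNuCompact (X : Type u) [TopologicalSpace X] (ν : Cardinal.{u}) : Prop :=
  ∀ 𝒰 : Set (Set X), (∀ U ∈ 𝒰, IsOpen U) → ⋃₀ 𝒰 = Set.univ → #𝒰 ≤ ν →
    ∃ 𝒱 ⊆ 𝒰, #𝒱 < ν ∧ Dense (⋃₀ 𝒱)

/-- A topological space is initially `lam`-compact if every open cover of cardinality at
most `lam` has a finite subcover. -/
def InitiallyCompact (X : Type u) [TopologicalSpace X] (lam : Cardinal.{u}) : Prop :=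
  ∀ 𝒰 : Set (Set X), (∀ U ∈ 𝒰, IsOpen U) → ⋃₀ 𝒰 = Set.univ → #𝒰 ≤ lam →
    ∃ 𝒱 ⊆ 𝒰, 𝒱.Finite ∧ ⋃₀ 𝒱 = Set.univ

/-- A topological space is weakly initially `lam`-compact if every open cover of cardinality
at most `lam` has a finite subfamily whose union is dense. -/
def WeakInitiallyCompact (X : Type u) [TopologicalSpace X] (lam : Cardinal.{u}) : Prop :=
  ∀ 𝒰 : Set (Set X), (∀ U ∈ 𝒰, IsOpen U) → ⋃₀ 𝒰 = Set.univ → #𝒰 ≤ lam →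
    ∃ 𝒱 ⊆ 𝒰, 𝒱.Finite ∧ Dense (⋃₀ 𝒱)

/-- The sequence `x` `D`-converges to `p`: for every open neighbourhood `U` of `p`,
`{i | x i ∈ U} ∈ D`. -/
def DConv {I : Type v} {X : Type u} [TopologicalSpace X] (D : Ultrafilter I)
    (x : I → X) (p : X) : Prop :=
  ∀ U : Set X, IsOpen U → p ∈ U → {i | x i ∈ U} ∈ D

/-- `X` is `D`-compact: every `I`-indexed sequence of elements of `X` `D`-converges to some
point of `X`. -/
def DCompact {I : Type v} (D : Ultrafilter I) (X : Type u) [TopologicalSpace X] : Prop :=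
  ∀ x : I → X, ∃ p : X, DConv D x p

/-- `p` is a `D`-limit point of the sequence of sets `Y`: for every neighbourhood `U`
of `p`, `{i | U ∩ Y i ≠ ∅} ∈ D`. -/
def DLimitPt {I : Type v} {X : Type u} [TopologicalSpace X] (D : Ultrafilter I)
    (Y : I → Set X) (p : X) : Prop :=
  ∀ U ∈ nhds p, {i | (U ∩ Y i).Nonempty} ∈ D

/-- `X` is `D`-pseudocompact: every `I`-indexed sequence of nonempty open sets of `X` has a
`D`-limit point. -/
def DPseudocompact {I : Type v} (D : Ultrafilter I) (X : Type u) [TopologicalSpace X] : Prop :=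
  ∀ O : I → Set X, (∀ i, IsOpen (O i)) → (∀ i, (O i).Nonempty) → ∃ p : X, DLimitPt D O p

/-- The ultrafilter `D` is `ν`-decomposable: there is `f : I → ν` such that the preimage of
every subset of `ν` of cardinality less than `ν` is not in `D`. -/
def Decomposable {I : Type v} (D : Ultrafilter I) (ν : Cardinal.{u}) : Prop :=
  ∃ f : I → ν.ord.ToType, ∀ S : Set ν.ord.ToType, #S < ν → f ⁻¹' S ∉ D

/-!
By the order-topology description of `𝓝 p`, `x` tends to `p` along `D` iff every `a < p` lies
in `A` and every `b > p` lies in `B`. Here `A` is a lower set, `B` an upper set, and they are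
disjoint. Since `D` is an ultrafilter, exactly one of `x = p`, `p < x`, `x < p` holds
`D`-eventually; in the last two cases `p ∈ A` (resp. `p ∈ B`), and for such `p` the two
inclusions amount to `p` being the greatest element of `A` (resp. least of `B`) with `A ∪ B`
covering `X`.
-/

section Order

variable {X : Type*} [LinearOrder X] {A B : Set X} {p : X}

theorem IsLowerSet.Iio_subset_and_Ioi_subset_iff (hA : IsLowerSet A) (hAB : Disjoint A B)
    (hp : p ∈ A) : Set.Iio p ⊆ A ∧ Set.Ioi p ⊆ B ↔ p ∈ upperBounds A ∧ A ∪ B = Set.univ := by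
  constructor
  · rintro ⟨hlt, hgt⟩
    refine ⟨fun a ha => not_lt.mp fun hpa => hAB.notMem_of_mem_left ha (hgt hpa), ?_⟩
    refine Set.eq_univ_of_forall fun q => ?_
    rcases lt_trichotomy q p with hq | rfl | hq
    exacts [Or.inl (hlt hq), Or.inl hp, Or.inr (hgt hq)]
  · rintro ⟨hmax, hcover⟩
    refine ⟨fun a ha => hA ha.le hp, fun b hb => ?_⟩
    rcases hcover.symm ▸ Set.mem_univ b with hbA | hbB
    exacts [absurd (hmax hbA) (not_le.mpr hb), hbB]

theorem IsUpperSet.Iio_subset_and_Ioi_subset_iff (hB : IsUpperSet B) (hAB : Disjoint A B)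
    (hp : p ∈ B) : Set.Iio p ⊆ A ∧ Set.Ioi p ⊆ B ↔ p ∈ lowerBounds B ∧ A ∪ B = Set.univ := by
  constructor
  · rintro ⟨hlt, hgt⟩
    refine ⟨fun b hb => not_lt.mp fun hbp => hAB.notMem_of_mem_left (hlt hbp) hb, ?_⟩
    refine Set.eq_univ_of_forall fun q => ?_
    rcases lt_trichotomy q p with hq | rfl | hq
    exacts [Or.inl (hlt hq), Or.inr hp, Or.inr (hgt hq)]
  · rintro ⟨hmin, hcover⟩
    refine ⟨fun a ha => ?_, fun b hb => hB hb.le hp⟩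
    rcases hcover.symm ▸ Set.mem_univ a with haA | haB
    exacts [haA, absurd (hmin haB) (not_le.mpr ha)]

end Order

section Eventually

variable {I X : Type*} [LinearOrder X] (l : Filter I) (x : I → X)

theorem isLowerSet_setOf_eventually_lt : IsLowerSet {a | ∀ᶠ i in l, a < x i} :=
  fun _ _ hba ha => ha.mono fun _ hi => hba.trans_lt hi

theorem isUpperSet_setOf_eventually_gt : IsUpperSet {b | ∀ᶠ i in l, x i < b} :=
  fun _ _ hab hb => hb.mono fun _ hi => hi.trans_le hab

theorem disjoint_setOf_eventually_lt_gt [l.NeBot] :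
    Disjoint {a | ∀ᶠ i in l, a < x i} {b | ∀ᶠ i in l, x i < b} :=
  Set.disjoint_left.mpr fun _ hlt hgt => (hlt.and hgt).exists.elim fun _ hi => lt_asymm hi.1 hi.2

theorem Ultrafilter.eventually_eq_or_lt_or_gt (D : Ultrafilter I) (q : X) :
    (∀ᶠ i in D, x i = q) ∨ (∀ᶠ i in D, q < x i) ∨ ∀ᶠ i in D, x i < q := by
  have htri : ∀ᶠ i in D, x i = q ∨ q < x i ∨ x i < q :=
    Eventually.of_forall fun i => (lt_trichotomy (x i) q).elim (Or.inr ∘ Or.inr)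
      fun h => h.elim Or.inl (Or.inr ∘ Or.inl)
  rwa [Ultrafilter.eventually_or, Ultrafilter.eventually_or] at htri

end Eventually

theorem dConv_iff_tendsto {I : Type v} {X : Type u} [TopologicalSpace X] (D : Ultrafilter I)
    (x : I → X) (p : X) : DConv D x p ↔ Tendsto x D (𝓝 p) :=
  tendsto_nhds.symm

/-- Characterization of `D`-convergence in LOTS. -/
theorem stmt4 {X : Type u} [LinearOrder X] [TopologicalSpace X] [OrderTopology X]
    {I : Type v} (D : Ultrafilter I) (x : I → X) (A B : Set X)
    (hA : A = {p : X | {i | p < x i} ∈ D}) (hB : B = {p : X | {i | x i < p} ∈ D})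
    (p : X) :
    DConv D x p ↔
      ({i | x i = p} ∈ D ∨
        (p ∈ A ∧ (∀ a ∈ A, a ≤ p) ∧ A ∪ B = Set.univ) ∨
        (p ∈ B ∧ (∀ b ∈ B, p ≤ b) ∧ A ∪ B = Set.univ)) := by
  subst hA hB
  have hlower := isLowerSet_setOf_eventually_lt (D : Filter I) x
  have hupper := isUpperSet_setOf_eventually_gt (D : Filter I) x
  have hdisj := disjoint_setOf_eventually_lt_gt (D : Filter I) x
  have hiff : DConv D x p ↔ Set.Iio p ⊆ _ ∧ Set.Ioi p ⊆ _ :=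
    (dConv_iff_tendsto D x p).trans tendsto_order
  rw [hiff]
  constructor
  · intro h
    rcases D.eventually_eq_or_lt_or_gt x p with hEq | hpA | hpB
    · exact Or.inl hEq
    · exact Or.inr (Or.inl ⟨hpA, (hlower.Iio_subset_and_Ioi_subset_iff hdisj hpA).1 h⟩)
    · exact Or.inr (Or.inr ⟨hpB, (hupper.Iio_subset_and_Ioi_subset_iff hdisj hpB).1 h⟩)
  · rintro (hEq | ⟨hpA, hmax⟩ | ⟨hpB, hmin⟩)
    · exact tendsto_order.1 (tendsto_nhds_of_eventually_eq hEq)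
    · exact (hlower.Iio_subset_and_Ioi_subset_iff hdisj hpA).2 hmax
    · exact (hupper.Iio_subset_and_Ioi_subset_iff hdisj hpB).2 hmin
end

section
/- Let D be an ultrafilter on a set I and let X be a GO space. Then X is D-compact if and only if X is D-pseudocompact. -/
universe u v

open Set Cardinal Filter Topology TopologicalSpace

/-! Suppose `x : I → X` has no `D`-limit. Then no point is `D`-almost always equal to `x i`,
so `X` splits into the points lying `D`-almost always below `x` and those lying `D`-almost
always above `x`: a cut that `x` approaches from one side or the other. In a GO space both halves
of the cut are open, and the open sets strictly between `x i` and the cut are `D`-almost all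
nonempty and have no `D`-limit point, against `D`-pseudocompactness. -/

/-- The local form of the GO-space axiom. -/
def OrdConnectedNhds (X : Type*) [LinearOrder X] [TopologicalSpace X] : Prop :=
  ∀ (p : X), ∀ U ∈ 𝓝 p, ∃ V ∈ 𝓝 p, V.OrdConnected ∧ V ⊆ U

instance {X : Type*} [TopologicalSpace X] [T2Space X] : T2Space Xᵒᵈ := ‹T2Space X›

namespace OrdConnectedNhds

variable {X : Type*} [LinearOrder X] [TopologicalSpace X]

theorem of_isTopologicalBasis {𝓑 : Set (Set X)} (hB : IsTopologicalBasis 𝓑)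
    (hconv : ∀ s ∈ 𝓑, s.OrdConnected) : OrdConnectedNhds X := by
  intro p U hU
  obtain ⟨V, hV𝓑, hpV, hVU⟩ := hB.mem_nhds_iff.mp hU
  exact ⟨V, (hB.isOpen hV𝓑).mem_nhds hpV, hconv V hV𝓑, hVU⟩

theorem dual (h : OrdConnectedNhds X) : OrdConnectedNhds Xᵒᵈ := fun p U hU =>
  let ⟨V, hV, hconv, hVU⟩ := h (OrderDual.ofDual p) U hU
  ⟨V, hV, hconv.dual, hVU⟩

variable [T2Space X]

theorem isOpen_Iio (h : OrdConnectedNhds X) (a : X) : IsOpen (Iio a) := by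
  refine isOpen_iff_mem_nhds.mpr fun z hz => ?_
  obtain ⟨u, v, hu, hv, huv⟩ := t2_separation_nhds (ne_of_lt hz)
  obtain ⟨V, hV, hconv, hVu⟩ := h z u hu
  refine Filter.mem_of_superset hV fun w hw => not_le.mp fun haw => ?_
  have haV : a ∈ V := hconv.out (mem_of_mem_nhds hV) hw ⟨le_of_lt hz, haw⟩
  exact huv.ne_of_mem (hVu haV) (mem_of_mem_nhds hv) rfl

theorem isOpen_Ioi (h : OrdConnectedNhds X) (a : X) : IsOpen (Ioi a) :=
  h.dual.isOpen_Iio (OrderDual.toDual a)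

end OrdConnectedNhds

section Cut

variable {I : Type*} {X : Type*} [LinearOrder X] (D : Ultrafilter I) (x : I → X)

def lowerCut : Set X := {a | ∀ᶠ i in (D : Filter I), a < x i}

def upperCut : Set X := {b | ∀ᶠ i in (D : Filter I), x i < b}

theorem eventually_exists_gt_of_mem_lowerCut :
    ∀ᶠ i in (D : Filter I), x i ∈ lowerCut D x → ∃ z ∈ lowerCut D x, x i < z := by
  by_cases hmax : ∃ p, IsGreatest (lowerCut D x) p
  · obtain ⟨p, hp, hpmax⟩ := hmax
    exact Filter.Eventually.mono hp fun i hpi hi => absurd (hpmax hi) (not_le.mpr hpi)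
  · push Not at hmax
    refine Filter.Eventually.of_forall fun i hi => ?_
    simpa [IsGreatest, upperBounds, hi] using hmax (x i)

theorem eventually_exists_lt_of_mem_upperCut :
    ∀ᶠ i in (D : Filter I), x i ∈ upperCut D x → ∃ z ∈ upperCut D x, z < x i :=
  eventually_exists_gt_of_mem_lowerCut (X := Xᵒᵈ) D x

variable {D x}

theorem isLowerSet_lowerCut : IsLowerSet (lowerCut D x) := fun _ _ hba ha =>
  Filter.Eventually.mono ha fun _ => lt_of_le_of_lt hba

theorem lt_of_mem_lowerCut_of_mem_upperCut {a b : X} (ha : a ∈ lowerCut D x)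
    (hb : b ∈ upperCut D x) : a < b :=
  let ⟨_, hai, hib⟩ := (ha.and hb).exists
  hai.trans hib

variable [TopologicalSpace X]

theorem mem_lowerCut_or_mem_upperCut {a : X} (ha : ¬ DConv D x a) :
    a ∈ lowerCut D x ∨ a ∈ upperCut D x := by
  have hne : ∀ᶠ i in (D : Filter I), x i ≠ a := by
    refine Ultrafilter.eventually_not.mpr fun heq => ha fun U _ haU => ?_
    exact Filter.Eventually.mono heq fun i hi => hi ▸ haU
  exact Ultrafilter.eventually_or.mp (hne.mono fun i hi => (lt_or_gt_of_ne hi).symm)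

end Cut

section GO

variable {I : Type*} {X : Type*} [LinearOrder X] [TopologicalSpace X] [T2Space X]
  {D : Ultrafilter I} {x : I → X}

theorem exists_Iic_mem_nhds_of_mem_lowerCut (hX : OrdConnectedNhds X)
    (hx : ∀ p, ¬ DConv D x p) {r : X} (hr : r ∈ lowerCut D x) :
    ∃ a ∈ lowerCut D x, Iic a ∈ 𝓝 r := by
  by_cases hgt : ∃ a ∈ lowerCut D x, r < a
  · obtain ⟨a, ha, hra⟩ := hgt
    exact ⟨a, ha, Filter.mem_of_superset ((hX.isOpen_Iio a).mem_nhds hra) Iio_subset_Iic_self⟩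
  push Not at hgt
  refine ⟨r, hr, ?_⟩
  obtain ⟨U, hU, hrU, hxU⟩ : ∃ U, IsOpen U ∧ r ∈ U ∧ {i | x i ∈ U} ∉ D := by
    simpa [DConv] using hx r
  obtain ⟨V, hV, hconv, hVU⟩ := hX r U (hU.mem_nhds hrU)
  -- A point `y ∈ V` above `r` lies in the upper cut, so eventually `x i ∈ [r, y] ⊆ V`.
  refine Filter.mem_of_superset hV fun y hy => not_lt.mp fun hry => hxU ?_
  have hyu : y ∈ upperCut D x :=
    (mem_lowerCut_or_mem_upperCut (hx y)).resolve_left fun hy' => (hgt y hy').not_gt hry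
  exact Filter.Eventually.mono (hr.and hyu) fun i hi =>
    hVU (hconv.out (mem_of_mem_nhds hV) hy ⟨hi.1.le, hi.2.le⟩)

theorem exists_Ici_mem_nhds_of_mem_upperCut (hX : OrdConnectedNhds X)
    (hx : ∀ p, ¬ DConv D x p) {r : X} (hr : r ∈ upperCut D x) :
    ∃ b ∈ upperCut D x, Ici b ∈ 𝓝 r :=
  exists_Iic_mem_nhds_of_mem_lowerCut (X := Xᵒᵈ) hX.dual hx hr

theorem isOpen_lowerCut (hX : OrdConnectedNhds X) (hx : ∀ p, ¬ DConv D x p) :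
    IsOpen (lowerCut D x) := isOpen_iff_mem_nhds.mpr fun _ hr =>
  let ⟨_, ha, hnhds⟩ := exists_Iic_mem_nhds_of_mem_lowerCut hX hx hr
  Filter.mem_of_superset hnhds fun _ hz => isLowerSet_lowerCut hz ha

theorem isOpen_upperCut (hX : OrdConnectedNhds X) (hx : ∀ p, ¬ DConv D x p) :
    IsOpen (upperCut D x) :=
  isOpen_lowerCut (X := Xᵒᵈ) hX.dual hx

end GO

section TowardCut

variable {I : Type*} {X : Type*} [LinearOrder X] {D : Ultrafilter I} {x : I → X}

variable (D x) in
def towardCut (i : I) : Set X := lowerCut D x ∩ Ioi (x i) ∪ upperCut D x ∩ Iio (x i)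

theorem eventually_disjoint_Iic_towardCut {a : X} (ha : a ∈ lowerCut D x) :
    ∀ᶠ i in (D : Filter I), Disjoint (Iic a) (towardCut D x i) :=
  ha.mono fun _ hai => disjoint_left.mpr fun _ hza hz => hz.elim
    (fun hz => (hz.2.trans_le hza).not_gt hai)
    (fun hz => (lt_of_mem_lowerCut_of_mem_upperCut ha hz.1).not_ge hza)

theorem eventually_disjoint_Ici_towardCut {b : X} (hb : b ∈ upperCut D x) :
    ∀ᶠ i in (D : Filter I), Disjoint (Ici b) (towardCut D x i) :=
  hb.mono fun _ hib => disjoint_left.mpr fun _ hzb hz => hz.elim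
    (fun hz => (lt_of_mem_lowerCut_of_mem_upperCut hz.1 hb).not_ge hzb)
    (fun hz => (hz.2.trans hib).not_ge hzb)

variable [TopologicalSpace X]

theorem eventually_nonempty_towardCut (hx : ∀ p, ¬ DConv D x p) :
    ∀ᶠ i in (D : Filter I), (towardCut D x i).Nonempty := by
  filter_upwards [eventually_exists_gt_of_mem_lowerCut D x,
    eventually_exists_lt_of_mem_upperCut D x] with i hgt hlt
  rcases mem_lowerCut_or_mem_upperCut (hx (x i)) with hi | hi
  · obtain ⟨z, hz, hiz⟩ := hgt hi
    exact ⟨z, .inl ⟨hz, hiz⟩⟩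
  · obtain ⟨z, hz, hzi⟩ := hlt hi
    exact ⟨z, .inr ⟨hz, hzi⟩⟩

variable [T2Space X]

theorem isOpen_towardCut (hX : OrdConnectedNhds X) (hx : ∀ p, ¬ DConv D x p) (i : I) :
    IsOpen (towardCut D x i) :=
  ((isOpen_lowerCut hX hx).inter (hX.isOpen_Ioi _)).union
    ((isOpen_upperCut hX hx).inter (hX.isOpen_Iio _))

theorem not_dLimitPt_towardCut (hX : OrdConnectedNhds X) (hx : ∀ p, ¬ DConv D x p) (p : X) :
    ¬ DLimitPt D (towardCut D x) p := by
  obtain ⟨V, hV, hdisj⟩ : ∃ V ∈ 𝓝 p, ∀ᶠ i in (D : Filter I), Disjoint V (towardCut D x i) := by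
    rcases mem_lowerCut_or_mem_upperCut (hx p) with hp | hp
    · obtain ⟨a, ha, hnhds⟩ := exists_Iic_mem_nhds_of_mem_lowerCut hX hx hp
      exact ⟨_, hnhds, eventually_disjoint_Iic_towardCut ha⟩
    · obtain ⟨b, hb, hnhds⟩ := exists_Ici_mem_nhds_of_mem_upperCut hX hx hp
      exact ⟨_, hnhds, eventually_disjoint_Ici_towardCut hb⟩
  intro hlim
  have hmeet : ∀ᶠ i in (D : Filter I), (V ∩ towardCut D x i).Nonempty := hlim V hV
  obtain ⟨i, hmeet, hi⟩ := (hmeet.and hdisj).exists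
  exact hmeet.not_disjoint hi

end TowardCut

section Ultracompactness

variable {I : Type v} {X : Type u} [TopologicalSpace X] {D : Ultrafilter I}

theorem DPseudocompact.exists_dLimitPt (h : DPseudocompact D X) {O : I → Set X}
    (hO : ∀ i, IsOpen (O i)) (hne : ∀ᶠ i in (D : Filter I), (O i).Nonempty) :
    ∃ p, DLimitPt D O p := by
  classical
  obtain ⟨-, z, -⟩ := hne.exists
  let O' i := if (O i).Nonempty then O i else univ
  obtain ⟨p, hp⟩ := h O' (fun i => by dsimp only [O']; split_ifs; exacts [hO i, isOpen_univ])
    (fun i => by dsimp only [O']; split_ifs with hi; exacts [hi, ⟨z, trivial⟩])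
  refine ⟨p, fun U hU => ?_⟩
  have hmeet : ∀ᶠ i in (D : Filter I), (U ∩ O' i).Nonempty := hp U hU
  refine Filter.mem_of_superset (hmeet.and hne) fun i hi => ?_
  simpa [O', hi.2] using hi.1

theorem DCompact.dPseudocompact (h : DCompact D X) : DPseudocompact D X := by
  intro O hO hne
  choose y hy using hne
  obtain ⟨p, hp⟩ := h y
  refine ⟨p, fun U hU => ?_⟩
  obtain ⟨V, hVU, hV, hpV⟩ := mem_nhds_iff.mp hU
  exact Filter.mem_of_superset (hp V hV hpV) fun i hi => ⟨y i, hVU hi, hy i⟩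

theorem DPseudocompact.dCompact [LinearOrder X] [T2Space X] (hX : OrdConnectedNhds X)
    (h : DPseudocompact D X) : DCompact D X := by
  intro x
  by_contra! hx
  obtain ⟨p, hp⟩ := h.exists_dLimitPt (isOpen_towardCut hX hx) (eventually_nonempty_towardCut hx)
  exact not_dLimitPt_towardCut hX hx p hp

end Ultracompactness

/-- For every ultrafilter `D`, a GO space is `D`-compact iff it is `D`-pseudocompact. -/
theorem stmt7 {I : Type v} (D : Ultrafilter I)
    (X : Type u) [LinearOrder X] [TopologicalSpace X] [T2Space X]
    (hGO : ∃ 𝓑 : Set (Set X), IsTopologicalBasis 𝓑 ∧ ∀ s ∈ 𝓑, s.OrdConnected) :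
    DCompact D X ↔ DPseudocompact D X :=
  let ⟨_, hB, hconv⟩ := hGO
  ⟨DCompact.dPseudocompact, DPseudocompact.dCompact (.of_isTopologicalBasis hB hconv)⟩
end
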